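/- For all integers h ≥ h₀ (some explicit threshold, e.g., h ≥ 20), the geometric-budget worst-case error (2^{(h+1)/3}−1)³/(2^{1/3}−1)³ is strictly smaller than the uniform-budget worst-case error (h+1)²(2^{h+1}−1). Moreover the ratio of geometric to uniform error tends to 0 as h → ∞. -/

import Mathlib

open Real Filter

/-- Worst-case error of the optimal geometric budget (up to the common factor `16/ε²`). -/
noncomputable def ErrGeom (h : ℕ) : ℝ :=
  ((2 : ℝ) ^ (((h : ℝ) + 1) / 3) - 1) ^ 3 / ((2 : ℝ) ^ ((1 : ℝ) / 3) - 1) ^ 3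

/-- Worst-case error of the uniform budget (up to the common factor `16/ε²`). -/
noncomputable def ErrUnif (h : ℕ) : ℝ :=
  ((h : ℝ) + 1) ^ 2 * (2 ^ (h + 1) - 1)

/-!
Write `t = 2^{1/3}` and `A = 2^{(h+1)/3}`, so that `A³ = 2^{h+1}`. Since `(5/4)³ < 2` we have
`t - 1 ≥ 1/4`, hence `ErrGeom h ≤ A³ / (1/4)³ = 64 · 2^{h+1}`, whereas
`ErrUnif h ≥ (h+1)² · 2^h`. The ratio is therefore at most `128 / (h+1)²`, which is below `1`
once `h ≥ 20` and tends to `0`.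
-/

lemma Real.rpow_div_three_pow_three {x : ℝ} (hx : 0 ≤ x) (y : ℝ) : (x ^ (y / 3)) ^ 3 = x ^ y := by
  rw [← Real.rpow_natCast, ← Real.rpow_mul hx]
  norm_num

lemma five_div_four_le_two_rpow_one_div_three : (5 / 4 : ℝ) ≤ 2 ^ ((1 : ℝ) / 3) := by
  have hcube : (5 / 4 : ℝ) ^ 3 ≤ (2 ^ ((1 : ℝ) / 3)) ^ 3 := by
    rw [Real.rpow_div_three_pow_three zero_le_two, Real.rpow_one]
    norm_num
  exact (pow_le_pow_iff_left₀ (by norm_num) (by positivity) three_ne_zero).mp hcube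

lemma ErrGeom_nonneg (h : ℕ) : 0 ≤ ErrGeom h := by
  have hA : (1 : ℝ) ≤ 2 ^ (((h : ℝ) + 1) / 3) := Real.one_le_rpow one_le_two (by positivity)
  have ht := five_div_four_le_two_rpow_one_div_three
  unfold ErrGeom
  exact div_nonneg (pow_nonneg (by linarith) 3) (pow_nonneg (by linarith) 3)

lemma ErrGeom_le (h : ℕ) : ErrGeom h ≤ 64 * 2 ^ (h + 1) := by
  set A : ℝ := 2 ^ (((h : ℝ) + 1) / 3)
  have hA : 1 ≤ A := Real.one_le_rpow one_le_two (by positivity)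
  have hA3 : A ^ 3 = 2 ^ (h + 1) := by
    rw [Real.rpow_div_three_pow_three zero_le_two, ← Real.rpow_natCast]
    push_cast
    rfl
  have hnum : (A - 1) ^ 3 ≤ 2 ^ (h + 1) :=
    hA3 ▸ pow_le_pow_left₀ (by linarith) (by linarith) 3
  have hden : (1 / 4 : ℝ) ^ 3 ≤ (2 ^ ((1 : ℝ) / 3) - 1) ^ 3 :=
    pow_le_pow_left₀ (by norm_num) (by linarith [five_div_four_le_two_rpow_one_div_three]) 3
  calc ErrGeom h ≤ 2 ^ (h + 1) / (1 / 4 : ℝ) ^ 3 :=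
        div_le_div₀ (by positivity) hnum (by norm_num) hden
    _ = 64 * 2 ^ (h + 1) := by ring

lemma sq_mul_two_pow_le_ErrUnif (h : ℕ) : ((h : ℝ) + 1) ^ 2 * 2 ^ h ≤ ErrUnif h := by
  have h1 : (1 : ℝ) ≤ 2 ^ h := one_le_pow₀ one_le_two
  unfold ErrUnif
  gcongr
  rw [pow_succ]
  linarith

lemma ErrUnif_pos (h : ℕ) : 0 < ErrUnif h :=
  lt_of_lt_of_le (by positivity) (sq_mul_two_pow_le_ErrUnif h)

lemma ErrGeom_div_ErrUnif_le (h : ℕ) : ErrGeom h / ErrUnif h ≤ 128 / ((h : ℝ) + 1) ^ 2 := by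
  rw [div_le_div_iff₀ (ErrUnif_pos h) (by positivity)]
  calc ErrGeom h * ((h : ℝ) + 1) ^ 2 ≤ 64 * 2 ^ (h + 1) * ((h : ℝ) + 1) ^ 2 := by
        gcongr
        exact ErrGeom_le h
    _ = 128 * (((h : ℝ) + 1) ^ 2 * 2 ^ h) := by ring
    _ ≤ 128 * ErrUnif h := by gcongr; exact sq_mul_two_pow_le_ErrUnif h

/-- For all `h ≥ 20` the geometric-budget worst-case error is strictly smaller than
the uniform-budget worst-case error, and the ratio of geometric to uniform error
tends to `0` as `h → ∞`. -/
theorem geometric_beats_uniform :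
    (∀ h : ℕ, 20 ≤ h → ErrGeom h < ErrUnif h) ∧
    Tendsto (fun h : ℕ => ErrGeom h / ErrUnif h) atTop (nhds 0) := by
  have hbound : Tendsto (fun h : ℕ => 128 / ((h : ℝ) + 1) ^ 2) atTop (nhds 0) :=
    tendsto_const_nhds.div_atTop <| (tendsto_pow_atTop two_ne_zero).comp <|
      tendsto_atTop_add_const_right _ 1 tendsto_natCast_atTop_atTop
  refine ⟨fun h hh => ?_, ?_⟩
  · have hh' : (21 : ℝ) ≤ (h : ℝ) + 1 := by exact_mod_cast Nat.succ_le_succ hh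
    have hratio : ErrGeom h / ErrUnif h < 1 :=
      (ErrGeom_div_ErrUnif_le h).trans_lt <| by
        rw [div_lt_one (by positivity)]
        nlinarith
    exact (div_lt_one (ErrUnif_pos h)).mp hratio
  · exact squeeze_zero (fun h => div_nonneg (ErrGeom_nonneg h) (ErrUnif_pos h).le)
      ErrGeom_div_ErrUnif_le hbound
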